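/- arXiv:2410.24130 — 3 statements merged into one kernel-verified Lean document; each statement's English description precedes it below -/
import Mathlib

section
/- For every graph G, r ∈ ℤ⁺, and proper edge-colouring c of G, the minimum size of an r-percolating set satisfies m_e(G,r) ≥ dim(W^r_{G,c}). -/
open Polynomial

namespace BondPerc

open Classical

set_option maxHeartbeats 1000000

/-- The set of edges eventually infected in `r`-bond bootstrap percolation on `G`
starting from the initially infected set `S`. -/
inductive Infected {V : Type*} (G : SimpleGraph V) (r : ℕ) (S : Set (Sym2 V)) : Sym2 V → Prop
  | init {e : Sym2 V} (he : e ∈ S) : Infected G r S e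
  | step {e : Sym2 V} (he : e ∈ G.edgeSet) (v : V) (hv : v ∈ e)
      (T : Finset (Sym2 V)) (hT : r ≤ T.card)
      (hT1 : ∀ f ∈ T, f ∈ G.edgeSet) (hT2 : ∀ f ∈ T, v ∈ f)
      (hT3 : ∀ f ∈ T, Infected G r S f) : Infected G r S e

/-- `S` percolates in `r`-bond bootstrap percolation on `G`. -/
def Percolates {V : Type*} (G : SimpleGraph V) (r : ℕ) (S : Set (Sym2 V)) : Prop :=
  S ⊆ G.edgeSet ∧ ∀ e ∈ G.edgeSet, Infected G r S e

/-- `m_e(G,r)`: the minimum size of an `r`-percolating set of edges of `G`. -/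
noncomputable def me {V : Type*} (G : SimpleGraph V) (r : ℕ) : ℕ :=
  sInf {n | ∃ S : Set (Sym2 V), S.Finite ∧ Percolates G r S ∧ S.ncard = n}

/-- `c` is a proper edge-colouring of `G`: edges sharing a vertex get distinct colours. -/
def IsProperEdgeColoring {V : Type*} (G : SimpleGraph V) (c : Sym2 V → ℝ) : Prop :=
  ∀ e ∈ G.edgeSet, ∀ f ∈ G.edgeSet, e ≠ f → (∃ v, v ∈ e ∧ v ∈ f) → c e ≠ c f

set_option maxHeartbeats 1000000 in
/-- The vector space `W^r_{G,c}` of tuples of polynomials `(p_v)` with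
`deg p_v ≤ min(r, deg v) - 1` and `p_u(c(uv)) = p_v(c(uv))` for every edge `uv`. -/
noncomputable def Wspace {V : Type*} [Fintype V] (G : SimpleGraph V) (r : ℕ)
    (c : Sym2 V → ℝ) : Submodule ℝ (V → Polynomial ℝ) where
  carrier := {p | (∀ v, (p v).degree < (min r (G.degree v) : ℕ)) ∧
    ∀ u v, G.Adj u v → (p u).eval (c s(u, v)) = (p v).eval (c s(u, v))}
  add_mem' := by
    rintro p q ⟨hp1, hp2⟩ ⟨hq1, hq2⟩
    refine ⟨fun v => lt_of_le_of_lt (degree_add_le _ _) (max_lt (hp1 v) (hq1 v)), ?_⟩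
    intro u v huv
    simp only [Pi.add_apply, eval_add, hp2 u v huv, hq2 u v huv]
  zero_mem' := by
    refine ⟨fun v => ?_, fun u v h => by simp⟩
    simp only [Pi.zero_apply, degree_zero]
    exact WithBot.bot_lt_coe _
  smul_mem' := by
    rintro a p ⟨hp1, hp2⟩
    refine ⟨fun v => lt_of_le_of_lt (degree_smul_le a (p v)) (hp1 v), ?_⟩
    intro u v huv
    simp only [Pi.smul_apply, Polynomial.eval_smul, hp2 u v huv]

/-- `dim W^r_{G,c}`. -/
noncomputable def Wdim {V : Type*} [Fintype V] (G : SimpleGraph V) (r : ℕ)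
    (c : Sym2 V → ℝ) : ℕ :=
  Module.finrank ℝ (Wspace G r c)

/-- `d^G_i`, the number of vertices of `G` of degree `i` (indexed by `ℤ`, zero for `i < 0`). -/
noncomputable def dcount {V : Type*} [Fintype V] (G : SimpleGraph V) (i : ℤ) : ℕ :=
  Nat.card {v : V // (G.degree v : ℤ) = i}

/-- The star `S_k` with centre `0` and `k` leaves. -/
def starGraph (k : ℕ) : SimpleGraph (Fin (k + 1)) :=
  SimpleGraph.fromRel fun i _ => i = 0

/-- The theta graph `H_{k,ℓ}`: two hub vertices joined by three internally disjoint
paths of lengths `1`, `ℓ - 1` and `k - 1`. -/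
def thetaGraph (k l : ℕ) : SimpleGraph (Fin 2 ⊕ Fin (l - 2) ⊕ Fin (k - 2)) :=
  SimpleGraph.fromRel fun x y =>
    (x = Sum.inl 0 ∧ y = Sum.inl 1) ∨
    (x = Sum.inl 0 ∧ ∃ j : Fin (l - 2), y = Sum.inr (Sum.inl j) ∧ j.val = 0) ∨
    (∃ i j : Fin (l - 2), x = Sum.inr (Sum.inl i) ∧ y = Sum.inr (Sum.inl j) ∧
      j.val = i.val + 1) ∨
    (∃ i : Fin (l - 2), x = Sum.inr (Sum.inl i) ∧ i.val = l - 3 ∧ y = Sum.inl 1) ∨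
    (x = Sum.inl 0 ∧ ∃ j : Fin (k - 2), y = Sum.inr (Sum.inr j) ∧ j.val = 0) ∨
    (∃ i j : Fin (k - 2), x = Sum.inr (Sum.inr i) ∧ y = Sum.inr (Sum.inr j) ∧
      j.val = i.val + 1) ∨
    (∃ i : Fin (k - 2), x = Sum.inr (Sum.inr i) ∧ i.val = k - 3 ∧ y = Sum.inl 1)


/-
A tuple `p ∈ W^r_{G,c}` that vanishes at `c(e)` on every edge `e` of a percolating set `S`
vanishes at `c(e)` on every infected edge: when an edge is infected through a vertex `v` with
`r` infected incident edges, `p_v` has degree `< r` and vanishes at `r` distinct colours, so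
`p_v = 0`, and the new edge's value at either endpoint agrees with `p_v`'s. Once all edges are
infected, each `p_v` has degree `< deg v` and vanishes at the `deg v` colours around `v`, so
`p = 0`. Hence evaluating on the edges of `S` is injective on `W^r_{G,c}`, and
`dim W^r_{G,c} ≤ |S|`.
-/

theorem IsProperEdgeColoring.injOn {V : Type*} {G : SimpleGraph V} {c : Sym2 V → ℝ}
    (hc : IsProperEdgeColoring G c) {T : Set (Sym2 V)} (hTG : T ⊆ G.edgeSet) {v : V}
    (hTv : ∀ f ∈ T, v ∈ f) : Set.InjOn c T := fun f hf g hg hfg => by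
  by_contra hne
  exact hc f (hTG hf) g (hTG hg) hne ⟨v, hTv f hf, hTv g hg⟩ hfg

section Wspace

variable {V : Type*} [Fintype V] {G : SimpleGraph V} {r : ℕ} {c : Sym2 V → ℝ}
  {p : V → ℝ[X]}

theorem Wspace.eval_eq_of_mem (hp : p ∈ Wspace G r c) {e : Sym2 V} (he : e ∈ G.edgeSet)
    {u v : V} (hu : u ∈ e) (hv : v ∈ e) : (p u).eval (c e) = (p v).eval (c e) := by
  induction e using Sym2.ind with
  | _ a b =>
    rw [SimpleGraph.mem_edgeSet] at he
    rcases Sym2.mem_iff.mp hu with rfl | rfl <;> rcases Sym2.mem_iff.mp hv with rfl | rfl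
    · rfl
    · exact hp.2 _ _ he
    · exact (hp.2 _ _ he).symm
    · rfl

theorem Wspace.eq_zero_of_eval_eq_zero (hc : IsProperEdgeColoring G c) (hp : p ∈ Wspace G r c)
    {v : V} {T : Finset (Sym2 V)} (hTG : ∀ f ∈ T, f ∈ G.edgeSet) (hTv : ∀ f ∈ T, v ∈ f)
    (hT : min r (G.degree v) ≤ T.card) (hzero : ∀ f ∈ T, (p v).eval (c f) = 0) : p v = 0 :=
  Polynomial.eq_zero_of_degree_lt_of_eval_index_eq_zero _ (hc.injOn hTG hTv)
    ((hp.1 v).trans_le (WithBot.coe_le_coe.mpr hT)) hzero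

theorem Wspace.eval_eq_zero_of_infected (hc : IsProperEdgeColoring G c) (hp : p ∈ Wspace G r c)
    {S : Set (Sym2 V)} (hS : ∀ e ∈ S, ∀ v ∈ e, (p v).eval (c e) = 0) {e : Sym2 V}
    (he : Infected G r S e) : ∀ v ∈ e, (p v).eval (c e) = 0 := by
  induction he with
  | init he => exact hS _ he
  | @step e he v hv T hT hTG hTv _ ih =>
    have hpv : p v = 0 :=
      eq_zero_of_eval_eq_zero hc hp hTG hTv ((min_le_left _ _).trans hT)
        fun f hf => ih f hf v (hTv f hf)
    intro w hw
    rw [eval_eq_of_mem hp he hw hv, hpv, eval_zero]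

theorem Wspace.eq_zero_of_percolates (hc : IsProperEdgeColoring G c) (hp : p ∈ Wspace G r c)
    {S : Set (Sym2 V)} (hS : Percolates G r S)
    (hzero : ∀ e ∈ S, ∀ v ∈ e, (p v).eval (c e) = 0) : p = 0 := by
  funext v
  refine eq_zero_of_eval_eq_zero hc hp (T := G.incidenceFinset v)
    (fun f hf => ((G.mem_incidenceFinset v f).mp hf).1)
    (fun f hf => ((G.mem_incidenceFinset v f).mp hf).2)
    ((min_le_right _ _).trans_eq (G.card_incidenceFinset_eq_degree v).symm) fun f hf => ?_
  have hf := (G.mem_incidenceFinset v f).mp hf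
  exact eval_eq_zero_of_infected hc hp hzero (hS.2 f hf.1) v hf.2

variable (G r c) in
-- The endpoint chosen by `Quot.out` is immaterial, by `Wspace.eval_eq_of_mem`.
noncomputable def Wspace.evalOn (S : Set (Sym2 V)) : Wspace G r c →ₗ[ℝ] (S → ℝ) where
  toFun p e := ((p : V → ℝ[X]) (Quot.out e.1).1).eval (c e)
  map_add' p q := by funext e; simp
  map_smul' a p := by funext e; simp

theorem Wspace.evalOn_injective (hc : IsProperEdgeColoring G c) {S : Set (Sym2 V)}
    (hS : Percolates G r S) : Function.Injective (evalOn G r c S) := by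
  rw [← LinearMap.ker_eq_bot, LinearMap.ker_eq_bot']
  intro p hp
  refine Subtype.ext (eq_zero_of_percolates hc p.2 hS fun e he v hv => ?_)
  rw [eval_eq_of_mem p.2 (hS.1 he) hv (Sym2.out_fst_mem e)]
  exact congrFun hp ⟨e, he⟩

theorem Wdim_le_ncard (hc : IsProperEdgeColoring G c) {S : Set (Sym2 V)} (hSfin : S.Finite)
    (hS : Percolates G r S) : Wdim G r c ≤ S.ncard := by
  have := hSfin.fintype
  calc Wdim G r c ≤ Module.finrank ℝ (S → ℝ) :=
        LinearMap.finrank_le_finrank_of_injective (Wspace.evalOn_injective hc hS)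
    _ = S.ncard := by
      rw [Module.finrank_fintype_fun_eq_card, ← Nat.card_eq_fintype_card, Nat.card_coe_set_eq]

end Wspace

theorem percolates_edgeSet {V : Type*} (G : SimpleGraph V) (r : ℕ) : Percolates G r G.edgeSet :=
  ⟨subset_rfl, fun _ he => Infected.init he⟩

theorem me_ge_Wdim_general {V : Type*} [Fintype V] (G : SimpleGraph V) (r : ℕ)
    (c : Sym2 V → ℝ) (hc : IsProperEdgeColoring G c) :
    Wdim G r c ≤ me G r :=
  le_csInf ⟨_, G.edgeSet, Set.toFinite _, percolates_edgeSet G r, rfl⟩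
    fun _ ⟨_, hSfin, hS, hcard⟩ => hcard ▸ Wdim_le_ncard hc hSfin hS

/-- The Hambardzumyan–Hatami–Qian inequality: `m_e(G,r) ≥ dim W^r_{G,c}`. -/
theorem me_ge_Wdim {V : Type*} [Fintype V] (G : SimpleGraph V) (r : ℕ) (hr : 1 ≤ r)
    (c : Sym2 V → ℝ) (hc : IsProperEdgeColoring G c) :
    Wdim G r c ≤ me G r :=
  me_ge_Wdim_general G r c hc

end BondPerc
end

section
/- Upper bound for products with stars: for integers r, k ≥ 1 and any graph G, m_e(G□S_k, r) ≤ m_e(G,r) + k·m_e(G,r−1) + Σ_{t=1}^{k−1} t·d^G_{r−t} + k·Σ_{t=k}^{r} d^G_{r−t}, where d^G_i is the number of vertices of G of degree i and S_k is the star with k leaves. -/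
open Polynomial

namespace BondPerc

open Classical

set_option maxHeartbeats 1000000

/-!
Take a minimum `r`-percolating set `S₀` and a minimum `(r - 1)`-percolating set `S₁` of `G`.
Seed `G □ S_k` with `S₀` in the central layer, `S₁` in each of the `k` leaf layers, and at every
vertex `v` the spokes `(v, 0)(v, i)` for `1 ≤ i ≤ min (r - deg v) k`. The central layer
percolates as `G` does. At `(v, 0)` the `deg v` central edges together with the seeded spokes
then reach `r` infected edges, so every spoke gets infected. Finally, in a leaf layer each vertex
has its infected spoke on top of the `r - 1` edges the infection of `S₁` provides, so the layer
percolates at threshold `r`. Grouping the vertices by `t = r - deg v` turns the number of seeded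
spokes into the degree sums.
-/

open Finset

section Infection

variable {V W : Type*} {G : SimpleGraph V} {P : SimpleGraph W}

/-- The edges `X` at `f v`, infected and outside `f(G)`, make up for the threshold rising
from `r'` to `r`. -/
theorem Infected.map (f : G ↪g P) {r r' : ℕ} {S : Set (Sym2 V)} {T : Set (Sym2 W)}
    (hextra : ∀ v, ∃ X : Finset (Sym2 W), r ≤ r' + #X ∧ ∀ e ∈ X,
      e ∈ P.edgeSet ∧ f v ∈ e ∧ e ∉ Set.range (Sym2.map f) ∧ Infected P r T e)
    (hS : ∀ e ∈ S, Infected P r T (Sym2.map f e))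
    {e : Sym2 V} (he : Infected G r' S e) : Infected P r T (Sym2.map f e) := by
  induction he with
  | init h => exact hS _ h
  | @step e he v hv U hU hU_edge hU_mem _ ih =>
    obtain ⟨X, hX, hX_mem⟩ := hextra v
    have hdisj : Disjoint (U.image (Sym2.map f)) X :=
      disjoint_left.2 fun e he hX =>
        (hX_mem e hX).2.2.1 (let ⟨a, _, ha⟩ := mem_image.1 he; ⟨a, ha⟩)
    refine .step (f.map_mem_edgeSet_iff.2 he) (f v) (Sym2.mem_map.2 ⟨v, hv, rfl⟩)
      (U.image (Sym2.map f) ∪ X) ?_ ?_ ?_ ?_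
    · rw [card_union_of_disjoint hdisj,
        card_image_of_injective _ (Sym2.map.injective f.injective)]
      omega
    all_goals
      simp only [mem_union, mem_image]
      rintro _ (⟨e, he, rfl⟩ | he)
    · exact f.map_mem_edgeSet_iff.2 (hU_edge e he)
    · exact (hX_mem _ he).1
    · exact Sym2.mem_map.2 ⟨v, hU_mem e he, rfl⟩
    · exact (hX_mem _ he).2.1
    · exact ih e he
    · exact (hX_mem _ he).2.2.2

end Infection

theorem exists_percolates_card_eq_me {V : Type*} [Finite V] (G : SimpleGraph V) (r : ℕ) :
    ∃ S : Finset (Sym2 V), Percolates G r S ∧ #S = me G r := by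
  have hne : {n | ∃ S : Set (Sym2 V), S.Finite ∧ Percolates G r S ∧ S.ncard = n}.Nonempty :=
    ⟨_, _, Set.toFinite _, ⟨subset_rfl, fun e he => .init he⟩, rfl⟩
  obtain ⟨S, hS, hperc, hcard⟩ := Nat.sInf_mem hne
  exact ⟨hS.toFinset, by simpa using hperc, by rwa [← Set.ncard_eq_toFinset_card]⟩

theorem me_le_card {V : Type*} {G : SimpleGraph V} {r : ℕ} {S : Finset (Sym2 V)}
    (h : Percolates G r S) : me G r ≤ #S :=
  Nat.sInf_le ⟨S, S.finite_toSet, h, Set.ncard_coe_finset S⟩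

section DegreeCount

variable {V : Type*} [Fintype V] (G : SimpleGraph V)

theorem dcount_natCast_sub (r t : ℕ) :
    dcount G ((r : ℤ) - t) = #{v | G.degree v + t = r} := by
  rw [dcount, Nat.card_eq_fintype_card, Fintype.card_subtype]
  congr 1
  ext v
  simp only [mem_filter, mem_univ, true_and]
  omega

theorem sum_mul_dcount (r : ℕ) (s : Finset ℕ) (w : ℕ → ℕ) :
    ∑ t ∈ s, w t * dcount G ((r : ℤ) - t) =
      ∑ v, if G.degree v ≤ r ∧ r - G.degree v ∈ s then w (r - G.degree v) else 0 := by
  simp_rw [dcount_natCast_sub, card_eq_sum_ones, mul_sum, sum_filter, mul_one]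
  rw [sum_comm]
  refine sum_congr rfl fun v _ => ?_
  by_cases hv : G.degree v ≤ r
  · have hcond : ∀ t, G.degree v + t = r ↔ r - G.degree v = t := fun t => by omega
    simp_rw [hcond, sum_ite_eq, hv, true_and]
  · rw [sum_eq_zero fun t _ => if_neg (by omega), if_neg (by tauto)]

theorem sum_min_sub_degree_le (r k : ℕ) :
    ∑ v, min (r - G.degree v) k ≤
      (∑ t ∈ Icc 1 (k - 1), t * dcount G ((r : ℤ) - t)) +
        k * ∑ t ∈ Icc k r, dcount G ((r : ℤ) - t) := by
  rw [mul_sum, sum_mul_dcount G r _ fun t => t, sum_mul_dcount G r _ fun _ => k,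
    ← sum_add_distrib]
  gcongr with v
  simp only [mem_Icc]
  split_ifs <;> omega

end DegreeCount

section Star

variable {V : Type*} [Fintype V] (G : SimpleGraph V) (k r : ℕ)

theorem starGraph_adj_zero {i : Fin (k + 1)} : (starGraph k).Adj 0 i ↔ i ≠ 0 := by
  simp [starGraph, SimpleGraph.fromRel_adj, eq_comm]

noncomputable def seedLeaves (v : V) : Finset (Fin (k + 1)) :=
  {i | i ≠ 0 ∧ (i : ℕ) + G.degree v ≤ r}

theorem mem_seedLeaves {v : V} {i : Fin (k + 1)} :
    i ∈ seedLeaves G k r v ↔ i ≠ 0 ∧ (i : ℕ) + G.degree v ≤ r := by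
  simp [seedLeaves]

theorem card_seedLeaves (v : V) : #(seedLeaves G k r v) = min (r - G.degree v) k := by
  have hval : (seedLeaves G k r v).map Fin.valEmbedding = Icc 1 (min (r - G.degree v) k) := by
    ext n
    simp only [seedLeaves, mem_map, mem_filter, mem_univ, true_and, Fin.valEmbedding_apply,
      mem_Icc, ne_eq, Fin.ext_iff, Fin.val_zero]
    constructor
    · rintro ⟨i, ⟨hi0, hi⟩, rfl⟩
      omega
    · intro hn
      exact ⟨⟨n, by omega⟩, by simp only; omega, rfl⟩
  rw [← card_map, hval, Nat.card_Icc]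
  omega

noncomputable def starSeed (S₀ S₁ : Finset (Sym2 V)) : Finset (Sym2 (V × Fin (k + 1))) :=
  S₀.image (Sym2.map (·, 0)) ∪
    ({i | i ≠ 0} : Finset (Fin (k + 1))).biUnion (fun i => S₁.image (Sym2.map (·, i))) ∪
    univ.biUnion fun v => (seedLeaves G k r v).image fun i => s((v, 0), (v, i))

theorem card_starSeed_le (S₀ S₁ : Finset (Sym2 V)) :
    #(starSeed G k r S₀ S₁) ≤ #S₀ + k * #S₁ + ∑ v, min (r - G.degree v) k := by
  have hleaves : #({i | i ≠ 0} : Finset (Fin (k + 1))) = k := by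
    rw [filter_ne' univ 0, card_erase_of_mem (mem_univ _), card_univ, Fintype.card_fin,
      Nat.add_sub_cancel]
  have h₀ := card_image_le (s := S₀) (f := Sym2.map (·, (0 : Fin (k + 1))))
  have h₁ : #(({i | i ≠ 0} : Finset (Fin (k + 1))).biUnion
      (fun i => S₁.image (Sym2.map (·, i)))) ≤ k * #S₁ :=
    card_biUnion_le.trans <| (sum_le_sum fun _ _ => card_image_le).trans <| by
      rw [sum_const, hleaves, smul_eq_mul]
  have h₂ : #(univ.biUnion fun v => (seedLeaves G k r v).image fun i => s((v, 0), (v, i))) ≤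
      ∑ v, min (r - G.degree v) k :=
    card_biUnion_le.trans <| sum_le_sum fun v _ =>
      card_image_le.trans (card_seedLeaves G k r v).le
  grw [starSeed, card_union_le, card_union_le, h₀, h₁, h₂]

end Star

theorem snd_eq_of_mem_sym2_map_prodMk {α β : Type*} {b : β} {e : Sym2 α} {x : α × β}
    (hx : x ∈ Sym2.map (·, b) e) : x.2 = b := by
  obtain ⟨a, -, rfl⟩ := Sym2.mem_map.1 hx
  rfl

theorem spoke_mem_edgeSet {V : Type*} {G : SimpleGraph V} {k : ℕ} (v : V) {i : Fin (k + 1)}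
    (hi : i ≠ 0) : s((v, 0), (v, i)) ∈ (G □ starGraph k).edgeSet :=
  SimpleGraph.boxProd_adj_right.2 ((starGraph_adj_zero k).2 hi)

section StarPercolation

variable {V : Type*} [Fintype V] {G : SimpleGraph V} {k r : ℕ} {S₀ S₁ : Finset (Sym2 V)}

theorem infected_starSeed_layer_zero (h₀ : Percolates G r S₀) {e : Sym2 V}
    (he : e ∈ G.edgeSet) :
    Infected (G □ starGraph k) r (starSeed G k r S₀ S₁) (Sym2.map (·, 0) e) :=
  Infected.map (SimpleGraph.boxProdLeft G (starGraph k) 0) (fun _ => ⟨∅, by simp, by simp⟩)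
    (fun e he => .init <| mem_coe.2 <| mem_union_left _ <| mem_union_left _ <|
      mem_image_of_mem _ he)
    (h₀.2 e he)

theorem infected_starSeed_spoke (h₀ : Percolates G r S₀) (v : V) {i : Fin (k + 1)}
    (hi : i ≠ 0) : Infected (G □ starGraph k) r (starSeed G k r S₀ S₁) s((v, 0), (v, i)) := by
  by_cases hseed : i ∈ seedLeaves G k r v
  · exact .init <| mem_coe.2 <| mem_union_right _ <|
      mem_biUnion.2 ⟨v, mem_univ _, mem_image_of_mem _ hseed⟩
  -- otherwise the `deg v` central edges at `(v, 0)` and its seeded spokes reach the threshold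
  set central := (G.incidenceFinset v).image (Sym2.map (·, (0 : Fin (k + 1))))
  set spokes := (seedLeaves G k r v).image fun j => s((v, (0 : Fin (k + 1))), (v, j))
  have hdisj : Disjoint central spokes := by
    refine disjoint_left.2 fun _ hc hs => ?_
    obtain ⟨e, -, rfl⟩ := mem_image.1 hc
    obtain ⟨j, hj, hje⟩ := mem_image.1 hs
    have hj0 : j = 0 := snd_eq_of_mem_sym2_map_prodMk (hje ▸ Sym2.mem_mk_right _ _)
    exact (mem_seedLeaves G k r |>.1 hj).1 hj0
  have hspoke_inj :
      Function.Injective fun j : Fin (k + 1) => s((v, (0 : Fin (k + 1))), (v, j)) :=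
    fun _ _ h => Prod.mk_right_injective v (Sym2.congr_right.1 h)
  have hcard : r ≤ #(central ∪ spokes) := by
    rw [card_union_of_disjoint hdisj]
    simp only [central, spokes]
    rw [card_image_of_injective _ (Sym2.map.injective (Prod.mk_left_injective 0)),
      card_image_of_injective _ hspoke_inj,
      G.card_incidenceFinset_eq_degree, card_seedLeaves]
    have := not_le.1 fun h => hseed ((mem_seedLeaves G k r).2 ⟨hi, h⟩)
    have := i.is_le
    omega
  refine .step (spoke_mem_edgeSet v hi) (v, 0) (Sym2.mem_mk_left _ _) _ hcard ?_ ?_ ?_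
  all_goals
    simp only [central, spokes, mem_union, mem_image]
    rintro _ (⟨e, he, rfl⟩ | ⟨j, hj, rfl⟩)
  · exact (SimpleGraph.boxProdLeft G (starGraph k) 0).map_mem_edgeSet_iff.2
      ((G.mem_incidenceFinset v e).1 he).1
  · exact spoke_mem_edgeSet v (mem_seedLeaves G k r |>.1 hj).1
  · exact Sym2.mem_map.2 ⟨v, (G.mem_incidenceFinset v e).1 he |>.2, rfl⟩
  · exact Sym2.mem_mk_left _ _
  · exact infected_starSeed_layer_zero h₀ ((G.mem_incidenceFinset v e).1 he).1
  · exact .init <| mem_coe.2 <| mem_union_right _ <|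
      mem_biUnion.2 ⟨v, mem_univ _, mem_image_of_mem _ hj⟩

theorem infected_starSeed_layer (h₀ : Percolates G r S₀) (h₁ : Percolates G (r - 1) S₁)
    (i : Fin (k + 1)) {e : Sym2 V} (he : e ∈ G.edgeSet) :
    Infected (G □ starGraph k) r (starSeed G k r S₀ S₁) (Sym2.map (·, i) e) := by
  obtain rfl | hi := eq_or_ne i 0
  · exact infected_starSeed_layer_zero h₀ he
  -- a leaf layer runs at threshold `r - 1`, the spoke at each vertex supplying the missing edge
  refine Infected.map (SimpleGraph.boxProdLeft G (starGraph k) i)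
    (fun v => ⟨{s((v, 0), (v, i))}, by simp; omega, ?_⟩) (fun e he => .init ?_) (h₁.2 e he)
  · simp only [mem_singleton, forall_eq, SimpleGraph.boxProdLeft_apply]
    refine ⟨spoke_mem_edgeSet v hi, Sym2.mem_mk_right _ _, ?_, infected_starSeed_spoke h₀ v hi⟩
    rintro ⟨e, he⟩
    have h0 : (v, 0) ∈ Sym2.map (SimpleGraph.boxProdLeft G (starGraph k) i) e :=
      he ▸ Sym2.mem_mk_left _ _
    exact hi (snd_eq_of_mem_sym2_map_prodMk (b := i) h0).symm
  · exact mem_coe.2 <| mem_union_left _ <| mem_union_right _ <|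
      mem_biUnion.2 ⟨i, by simpa using hi, mem_image_of_mem _ he⟩

theorem starSeed_subset_edgeSet (h₀ : Percolates G r S₀) (h₁ : Percolates G (r - 1) S₁) :
    (starSeed G k r S₀ S₁ : Set _) ⊆ (G □ starGraph k).edgeSet := by
  intro e he
  simp only [starSeed, coe_union, Set.mem_union, mem_coe, mem_image, mem_biUnion] at he
  rcases he with (⟨e, he, rfl⟩ | ⟨i, -, e, he, rfl⟩) | ⟨v, -, i, hi, rfl⟩
  · exact (SimpleGraph.boxProdLeft G (starGraph k) 0).map_mem_edgeSet_iff.2 (h₀.1 he)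
  · exact (SimpleGraph.boxProdLeft G (starGraph k) i).map_mem_edgeSet_iff.2 (h₁.1 he)
  · exact spoke_mem_edgeSet v ((mem_seedLeaves G k r).1 hi).1

theorem percolates_starSeed (h₀ : Percolates G r S₀) (h₁ : Percolates G (r - 1) S₁) :
    Percolates (G □ starGraph k) r (starSeed G k r S₀ S₁) := by
  refine ⟨starSeed_subset_edgeSet h₀ h₁, fun e he => ?_⟩
  induction e using Sym2.ind with | _ x y => ?_
  obtain ⟨u, i⟩ := x
  obtain ⟨w, j⟩ := y
  have hadj : (G □ starGraph k).Adj (u, i) (w, j) := he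
  simp only [SimpleGraph.boxProd_adj] at hadj
  rcases hadj with ⟨hG, rfl⟩ | ⟨⟨hne, rfl | rfl⟩, rfl⟩
  · exact infected_starSeed_layer h₀ h₁ i (e := s(u, w)) hG
  · exact infected_starSeed_spoke h₀ u hne.symm
  · exact Sym2.eq_swap ▸ infected_starSeed_spoke h₀ u hne

end StarPercolation

theorem star_upper_general {V : Type*} [Fintype V] (G : SimpleGraph V) (r k : ℕ) :
    me (G □ starGraph k) r ≤
      me G r + k * me G (r - 1) +
      (∑ t ∈ Finset.Icc 1 (k - 1), t * dcount G ((r : ℤ) - t)) +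
      k * ∑ t ∈ Finset.Icc k r, dcount G ((r : ℤ) - t) := by
  obtain ⟨S₀, h₀, hS₀⟩ := exists_percolates_card_eq_me G r
  obtain ⟨S₁, h₁, hS₁⟩ := exists_percolates_card_eq_me G (r - 1)
  calc me (G □ starGraph k) r
      ≤ #(starSeed G k r S₀ S₁) := me_le_card (percolates_starSeed h₀ h₁)
    _ ≤ #S₀ + k * #S₁ + ∑ v, min (r - G.degree v) k := card_starSeed_le G k r S₀ S₁
    _ ≤ _ := by
      rw [hS₀, hS₁, add_assoc (_ + _)]
      grw [sum_min_sub_degree_le]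

/-- Upper bound on `m_e(G □ S_k, r)` for the star `S_k` with `k` leaves. -/
theorem star_upper {V : Type*} [Fintype V] (G : SimpleGraph V) (r k : ℕ)
    (hr : 1 ≤ r) (hk : 1 ≤ k) :
    me (G □ starGraph k) r ≤
      me G r + k * me G (r - 1) +
      (∑ t ∈ Finset.Icc 1 (k - 1), t * dcount G ((r : ℤ) - t)) +
      k * ∑ t ∈ Finset.Icc k r, dcount G ((r : ℤ) - t) :=
  star_upper_general G r k

end BondPerc
end

section
/- Lower bound for star products via polynomial spaces: for integers r, k ≥ 1 and any graph G with a proper edge-colouring c, there exists a proper edge-colouring c′ of G□S_k with dim(W^r_{G□S_k, c′}) ≥ dim(W^r_{G,c}) + k·dim(W^{r−1}_{G,c}) + Σ_{t=1}^{k−1} t·d^G_{r−t} + k·Σ_{t=k}^{r} d^G_{r−t}. -/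
open Polynomial

namespace BondPerc

open Classical

set_option maxHeartbeats 1000000

/-!
Colour the copies of `G` by `c` and the `j`-th star edge at every vertex by a fresh colour `γ_j`.
Let `P_v = ∏_{u ~ v} (X - c(uv))`. A triple `(p, q, h)` with `p ∈ W^r_{G,c}`,
`q_1, …, q_k ∈ W^{r-1}_{G,c}` and `deg h_v < min(r - deg v, k)` yields the element of
`W^r_{G □ S_k}` that is `p_v + P_v h_v` at the hub copy of `v` and
`p_v + (X - γ_j) q_{j,v} + h_v(γ_j) P_v` at its `j`-th leaf copy. As `P_v` vanishes at the colours
of the edges at `v`, the constraints along copies of `G` are those of `p` and the `q_j`; at both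
ends of a star edge the value at `γ_j` is `p_v(γ_j) + P_v(γ_j) h_v(γ_j)`. The map is injective
since `deg p_v < deg P_v`, and the `d^G` terms of the bound add up to `∑_v min(r - deg v, k)`.
-/

lemma isProperEdgeColoring_iff {V : Type*} {G : SimpleGraph V} {c : Sym2 V → ℝ} :
    IsProperEdgeColoring G c ↔
      ∀ x y z, G.Adj x y → G.Adj x z → y ≠ z → c s(x, y) ≠ c s(x, z) := by
  constructor
  · intro hc x y z hxy hxz hyz
    exact hc _ hxy _ hxz (by simp [hyz, hxz.ne]) ⟨x, Sym2.mem_mk_left _ _, Sym2.mem_mk_left _ _⟩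
  · rintro hc e he f hf hef ⟨x, hxe, hxf⟩
    obtain ⟨y, rfl⟩ := Sym2.mem_iff_exists.mp hxe
    obtain ⟨z, rfl⟩ := Sym2.mem_iff_exists.mp hxf
    exact hc x y z he hf (by rintro rfl; exact hef rfl)

section BoxColoring

variable {V A : Type*} [AddCancelCommMonoid A]

/-- Edges `s((v, a), (v, b))` coming from `H` get the colour `γ (a + b)`: as `b ↦ a + b` is
injective, two of them at a common vertex never clash. -/
noncomputable def boxColoring (c : Sym2 V → ℝ) (γ : A → ℝ) : Sym2 (V × A) → ℝ :=
  Sym2.lift ⟨fun x y => if x.2 = y.2 then c s(x.1, y.1) else γ (x.2 + y.2), fun x y => by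
    simp only [eq_comm, Sym2.eq_swap, add_comm]⟩

lemma boxColoring_mk (c : Sym2 V → ℝ) (γ : A → ℝ) (x y : V × A) :
    boxColoring c γ s(x, y) = if x.2 = y.2 then c s(x.1, y.1) else γ (x.2 + y.2) :=
  rfl

lemma IsProperEdgeColoring.boxProd {G : SimpleGraph V} {H : SimpleGraph A} {c : Sym2 V → ℝ}
    (hc : IsProperEdgeColoring G c) {γ : A → ℝ} (hγ : Function.Injective γ)
    (hcγ : Disjoint (Set.range c) (Set.range γ)) :
    IsProperEdgeColoring (G □ H) (boxColoring c γ) := by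
  rw [isProperEdgeColoring_iff] at hc ⊢
  rintro ⟨v, a⟩ ⟨u, b⟩ ⟨w, d⟩ hu hw huw
  simp only [boxColoring_mk]
  rcases hu with ⟨hu, rfl : a = b⟩ | ⟨hu, rfl : v = u⟩ <;>
    rcases hw with ⟨hw, rfl : a = d⟩ | ⟨hw, rfl : v = w⟩
  · simpa using hc v u w hu hw (by rintro rfl; exact huw rfl)
  · simpa [hw.ne] using hcγ.ne_of_mem ⟨_, rfl⟩ ⟨_, rfl⟩
  · simpa [hu.ne] using (hcγ.ne_of_mem ⟨_, rfl⟩ ⟨_, rfl⟩).symm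
  · simpa [hu.ne, hw.ne] using hγ.ne (by simpa using huw)

end BoxColoring

lemma starGraph_adj {k : ℕ} {i j : Fin (k + 1)} :
    (starGraph k).Adj i j ↔ i ≠ j ∧ (i = 0 ∨ j = 0) := by
  simp [starGraph]

lemma starGraph_degree_zero (k : ℕ) : (starGraph k).degree 0 = k := by
  have : (starGraph k).neighborFinset 0 = {0}ᶜ := by
    ext j
    simp [starGraph_adj, eq_comm]
  rw [SimpleGraph.degree, this, Finset.card_compl]
  simp

lemma starGraph_degree_succ {k : ℕ} (j : Fin k) : (starGraph k).degree j.succ = 1 := by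
  have : (starGraph k).neighborFinset j.succ = {0} := by
    ext i
    simp only [SimpleGraph.mem_neighborFinset, starGraph_adj, Finset.mem_singleton]
    constructor
    · rintro ⟨-, h | h⟩
      exacts [absurd h j.succ_ne_zero, h]
    · rintro rfl
      exact ⟨j.succ_ne_zero, Or.inr rfl⟩
  simp [SimpleGraph.degree, this]

section BoxStar

variable {V : Type*} [Fintype V] (G : SimpleGraph V) {k : ℕ}

lemma boxProd_starGraph_degree_zero (v : V) :
    (G □ starGraph k).degree (v, 0) = G.degree v + k := by
  convert SimpleGraph.degree_boxProd (G := G) (H := starGraph k) (v, 0) using 2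
  exact (starGraph_degree_zero k).symm

lemma boxProd_starGraph_degree_succ (v : V) (j : Fin k) :
    (G □ starGraph k).degree (v, j.succ) = G.degree v + 1 := by
  convert SimpleGraph.degree_boxProd (G := G) (H := starGraph k) (v, j.succ) using 2
  exact (starGraph_degree_succ j).symm

end BoxStar

lemma degree_lt_natCast_iff {R : Type*} [Semiring R] {p : R[X]} {n : ℕ} :
    p.degree < n ↔ (p ≠ 0 → p.natDegree < n) := by
  by_cases hp : p = 0
  · simp [hp]
  · simp [hp, natDegree_lt_iff_degree_lt hp]

lemma degree_mul_lt_of_natDegree_add_lt {R : Type*} [Semiring R] {p q : R[X]} {n : ℕ}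
    (h : p * q ≠ 0 → p.natDegree + q.natDegree < n) : (p * q).degree < n :=
  degree_lt_natCast_iff.mpr fun hpq => natDegree_mul_le.trans_lt (h hpq)

section VertexPoly

variable {V : Type*} [Fintype V] (G : SimpleGraph V) (c : Sym2 V → ℝ)

noncomputable def vertexPoly (v : V) : ℝ[X] :=
  ∏ u ∈ G.neighborFinset v, (X - C (c s(v, u)))

lemma vertexPoly_monic (v : V) : (vertexPoly G c v).Monic :=
  monic_prod_of_monic _ _ fun _ _ => monic_X_sub_C _

lemma vertexPoly_natDegree (v : V) : (vertexPoly G c v).natDegree = G.degree v := by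
  rw [vertexPoly, natDegree_prod_of_monic _ _ fun _ _ => monic_X_sub_C _]
  simp

lemma vertexPoly_eval_of_adj {u v : V} (h : G.Adj u v) :
    (vertexPoly G c u).eval (c s(u, v)) = 0 := by
  rw [vertexPoly, eval_prod]
  exact Finset.prod_eq_zero (by simpa using h) (by simp)

end VertexPoly

instance {V : Type*} [Fintype V] (G : SimpleGraph V) (r : ℕ) (c : Sym2 V → ℝ) :
    FiniteDimensional ℝ (Wspace G r c) := by
  refine Submodule.finiteDimensional_of_le (S₂ := LinearMap.range
    (LinearMap.compLeft (degreeLT ℝ r).subtype V)) fun p hp => ?_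
  refine ⟨fun v => ⟨p v, mem_degreeLT.mpr ((hp.1 v).trans_le ?_)⟩, rfl⟩
  exact_mod_cast min_le_left _ _

lemma finrank_degreeLT {R : Type*} [Ring R] [StrongRankCondition R] (n : ℕ) :
    Module.finrank R (degreeLT R n) = n := by
  simp [Module.finrank_eq_card_basis (degreeLT.basis R n)]

lemma sum_Icc_ite_add_eq_min (d r k : ℕ) :
    (∑ t ∈ Finset.Icc 1 (k - 1), if d + t = r then t else 0) +
      k * ∑ t ∈ Finset.Icc k r, (if d + t = r then 1 else 0) = min (r - d) k := by
  by_cases hdr : d ≤ r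
  · have hiff : ∀ t, d + t = r ↔ r - d = t := by omega
    simp only [hiff, Finset.sum_ite_eq, Finset.mem_Icc]
    split_ifs <;> omega
  · have hne : ∀ t, ¬d + t = r := by omega
    simp only [hne, if_false, Finset.sum_const_zero]
    omega

lemma dcount_sub_natCast {V : Type*} [Fintype V] (G : SimpleGraph V) (r t : ℕ) :
    dcount G ((r : ℤ) - t) = ∑ v, if G.degree v + t = r then 1 else 0 := by
  rw [dcount, Nat.card_eq_fintype_card, Fintype.card_subtype, Finset.card_filter]
  refine Finset.sum_congr rfl fun v _ => if_congr ?_ rfl rfl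
  omega

lemma sum_dcount_eq_sum_min {V : Type*} [Fintype V] (G : SimpleGraph V) (r k : ℕ) :
    (∑ t ∈ Finset.Icc 1 (k - 1), t * dcount G ((r : ℤ) - t)) +
        k * ∑ t ∈ Finset.Icc k r, dcount G ((r : ℤ) - t) =
      ∑ v, min (r - G.degree v) k := by
  simp only [dcount_sub_natCast, Finset.mul_sum, mul_ite, mul_one, mul_zero]
  rw [Finset.sum_comm, Finset.sum_comm (s := Finset.Icc k r), ← Finset.sum_add_distrib]
  refine Finset.sum_congr rfl fun v _ => ?_
  rw [← sum_Icc_ite_add_eq_min, Finset.mul_sum]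
  simp only [mul_ite, mul_one, mul_zero]

section StarLift

variable {V : Type*} [Fintype V] (G : SimpleGraph V) (r k : ℕ) (c : Sym2 V → ℝ)

abbrev StarData : Type _ :=
  Wspace G r c × (Fin k → Wspace G (r - 1) c) ×
    ((v : V) → degreeLT ℝ (min (r - G.degree v) k))

lemma finrank_starData :
    Module.finrank ℝ (StarData G r k c) =
      Wdim G r c + k * Wdim G (r - 1) c + ∑ v, min (r - G.degree v) k := by
  simp [StarData, Module.finrank_prod, Module.finrank_pi_fintype, finrank_degreeLT, Wdim,
    add_assoc]

noncomputable def starLift (γ : Fin (k + 1) → ℝ) :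
    StarData G r k c →ₗ[ℝ] (V × Fin (k + 1) → ℝ[X]) where
  toFun x y := (x.1 : V → ℝ[X]) y.1 +
    (Fin.cons (vertexPoly G c y.1 * x.2.2 y.1) fun j =>
      (X - C (γ j.succ)) * (x.2.1 j : V → ℝ[X]) y.1 +
        C ((x.2.2 y.1 : ℝ[X]).eval (γ j.succ)) * vertexPoly G c y.1 : Fin (k + 1) → ℝ[X]) y.2
  map_add' x y := by
    funext ⟨v, i⟩
    cases i using Fin.cases <;>
      simp only [Prod.fst_add, Prod.snd_add, Submodule.coe_add, Pi.add_apply, eval_add, map_add,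
        Fin.cons_zero, Fin.cons_succ] <;> ring
  map_smul' a x := by
    funext ⟨v, i⟩
    cases i using Fin.cases <;>
      simp only [Prod.smul_fst, Prod.smul_snd, SetLike.val_smul, Pi.smul_apply, smul_eq_C_mul,
        eval_mul, eval_C, map_mul, Fin.cons_zero, Fin.cons_succ, RingHom.id_apply] <;> ring

variable {G r k c} (γ : Fin (k + 1) → ℝ) (x : StarData G r k c)

@[simp] lemma starLift_apply_zero (v : V) :
    starLift G r k c γ x (v, 0) = (x.1 : V → ℝ[X]) v + vertexPoly G c v * x.2.2 v :=
  rfl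

@[simp] lemma starLift_apply_succ (v : V) (j : Fin k) :
    starLift G r k c γ x (v, j.succ) = (x.1 : V → ℝ[X]) v + ((X - C (γ j.succ)) *
      (x.2.1 j : V → ℝ[X]) v + C ((x.2.2 v : ℝ[X]).eval (γ j.succ)) * vertexPoly G c v) :=
  rfl

lemma starLift_degree_lt (y : V × Fin (k + 1)) :
    (starLift G r k c γ x y).degree < (min r ((G □ starGraph k).degree y) : ℕ) := by
  obtain ⟨v, i⟩ := y
  have hp := degree_lt_natCast_iff.mp (x.1.2.1 v)
  have hh := degree_lt_natCast_iff.mp (mem_degreeLT.mp (x.2.2 v).2)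
  have hP := vertexPoly_natDegree G c v
  cases i using Fin.cases with
  | zero =>
    rw [starLift_apply_zero, boxProd_starGraph_degree_zero]
    refine (degree_add_le _ _).trans_lt (max_lt ?_ ?_)
    · exact degree_lt_natCast_iff.mpr fun h => by have := hp h; omega
    · refine degree_mul_lt_of_natDegree_add_lt fun h => ?_
      have := hh (right_ne_zero_of_mul h)
      omega
  | succ j =>
    have hq := degree_lt_natCast_iff.mp ((x.2.1 j).2.1 v)
    rw [starLift_apply_succ, boxProd_starGraph_degree_succ]
    refine (degree_add_le _ _).trans_lt
      (max_lt ?_ <| (degree_add_le _ _).trans_lt (max_lt ?_ ?_))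
    · exact degree_lt_natCast_iff.mpr fun h => by have := hp h; omega
    · refine degree_mul_lt_of_natDegree_add_lt fun h => ?_
      have := hq (right_ne_zero_of_mul h)
      rw [natDegree_X_sub_C]
      omega
    · refine degree_mul_lt_of_natDegree_add_lt fun h => ?_
      have hh0 : (x.2.2 v : ℝ[X]) ≠ 0 := by
        rintro h0
        simp [h0] at h
      have := hh hh0
      rw [natDegree_C]
      omega

lemma starLift_eval_eq {y z : V × Fin (k + 1)} (hyz : (G □ starGraph k).Adj y z) :
    (starLift G r k c γ x y).eval (boxColoring c γ s(y, z)) =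
      (starLift G r k c γ x z).eval (boxColoring c γ s(y, z)) := by
  obtain ⟨u, i⟩ := y
  obtain ⟨v, j⟩ := z
  rcases hyz with ⟨huv, rfl : i = j⟩ | ⟨hij, rfl : u = v⟩
  · have hu := vertexPoly_eval_of_adj G c huv
    have hv := vertexPoly_eval_of_adj G c huv.symm
    rw [Sym2.eq_swap] at hv
    have hp := x.1.2.2 u v huv
    cases i using Fin.cases with
    | zero => simp [boxColoring_mk, hu, hv, hp]
    | succ j => simp [boxColoring_mk, hu, hv, hp, (x.2.1 j).2.2 u v huv]
  · rw [starGraph_adj] at hij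
    cases i using Fin.cases <;> cases j using Fin.cases <;>
      simp_all [boxColoring_mk, Fin.succ_ne_zero, mul_comm]

lemma starLift_mem : starLift G r k c γ x ∈ Wspace (G □ starGraph k) r (boxColoring c γ) :=
  ⟨fun y => by convert starLift_degree_lt γ x y, fun _ _ => starLift_eval_eq γ x⟩

lemma starLift_injective : Function.Injective (starLift G r k c γ) := by
  rw [← LinearMap.ker_eq_bot, LinearMap.ker_eq_bot']
  intro x hx
  have hub : ∀ v, (x.1 : V → ℝ[X]) v = 0 ∧ (x.2.2 v : ℝ[X]) = 0 := fun v => by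
    have hsum := congrFun hx (v, 0)
    rw [starLift_apply_zero, Pi.zero_apply] at hsum
    have hdeg : ((x.1 : V → ℝ[X]) v).degree < (vertexPoly G c v).degree := by
      rw [degree_eq_natDegree (vertexPoly_monic G c v).ne_zero, vertexPoly_natDegree]
      exact (x.1.2.1 v).trans_le (by exact_mod_cast min_le_right _ _)
    obtain ⟨hdiv, hmod⟩ := div_modByMonic_unique _ _ (vertexPoly_monic G c v) ⟨hsum, hdeg⟩
    simp only [zero_divByMonic, zero_modByMonic] at hdiv hmod
    exact ⟨hmod.symm, hdiv.symm⟩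
  have hleaf : ∀ j v, (x.2.1 j : V → ℝ[X]) v = 0 := fun j v => by
    have hsum := congrFun hx (v, j.succ)
    simpa [(hub v).1, (hub v).2, X_sub_C_ne_zero] using hsum
  exact Prod.ext (Subtype.ext (funext fun v => (hub v).1)) <| Prod.ext
    (funext fun j => Subtype.ext (funext (hleaf j))) (funext fun v => Subtype.ext (hub v).2)

end StarLift

theorem star_lower_general {V : Type*} [Fintype V] (G : SimpleGraph V) (r k : ℕ)
    (c : Sym2 V → ℝ) (hc : IsProperEdgeColoring G c) :
    ∃ c' : Sym2 (V × Fin (k + 1)) → ℝ, IsProperEdgeColoring (G □ starGraph k) c' ∧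
      Wdim G r c + k * Wdim G (r - 1) c +
        (∑ t ∈ Finset.Icc 1 (k - 1), t * dcount G ((r : ℤ) - t)) +
        k * ∑ t ∈ Finset.Icc k r, dcount G ((r : ℤ) - t) ≤
      Wdim (G □ starGraph k) r c' := by
  obtain ⟨γ, hγ⟩ := Fin.Embedding.exists_embedding_disjoint_range_of_add_le_ENat_card
    (s := Set.range c) (n := k + 1) (by simp [ENat.card_eq_top_of_infinite])
  refine ⟨boxColoring c γ, hc.boxProd γ.injective hγ, ?_⟩
  rw [add_assoc, sum_dcount_eq_sum_min, ← finrank_starData]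
  exact LinearMap.finrank_le_finrank_of_injective
    (f := (starLift G r k c γ).codRestrict _ (starLift_mem γ))
    fun _ _ h => starLift_injective γ (congrArg Subtype.val h)

/-- Lower bound for star products via polynomial spaces. -/
theorem star_lower {V : Type*} [Fintype V] (G : SimpleGraph V) (r k : ℕ)
    (hr : 1 ≤ r) (hk : 1 ≤ k) (c : Sym2 V → ℝ) (hc : IsProperEdgeColoring G c) :
    ∃ c' : Sym2 (V × Fin (k + 1)) → ℝ, IsProperEdgeColoring (G □ starGraph k) c' ∧
      Wdim G r c + k * Wdim G (r - 1) c +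
        (∑ t ∈ Finset.Icc 1 (k - 1), t * dcount G ((r : ℤ) - t)) +
        k * ∑ t ∈ Finset.Icc k r, dcount G ((r : ℤ) - t) ≤
      Wdim (G □ starGraph k) r c' :=
  star_lower_general G r k c hc

end BondPerc
end
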